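/- Exact SIO dilution from a decomposition: let ρ' be a state admitting a finite pure-state decomposition ρ' = Σ_j p_j |ψ_j⟩⟨ψ_j| (p_j > 0) in which every |ψ_j⟩ has at most M nonzero computational-basis coefficients. Then there exists a CPTP map Λ(ω) = Σ_n K_n ω K_n† in which every Kraus operator K_n and every adjoint K_n† is incoherent-preserving (i.e., Λ is a strictly incoherent operation, hence also an incoherent operation), such that Λ(Ψ_M) = ρ'. -/

import Mathlib

/-!
Since `ψ_j` has at most `M` nonzero coefficients, an injection `σ_j` of its support into
`Fin M` lets us write `√p_j ψ_j` as the row sums of each of the `M` operators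
`K_{j,m} = ∑_r √p_j ψ_j(r) |r⟩⟨σ_j(r) + m|`. As `Ψ_M` is the constant matrix `1/M`,
`K Ψ_M Kᴴ = (1/M) |row sums of K⟩⟨row sums of K|`, so summing over `m` and `j` gives `ρ'`.
Every `K_{j,m}` has at most one nonzero entry in each row and each column, which makes both
`K_{j,m}` and `K_{j,m}ᴴ` incoherent-preserving, and the cyclic shifts by `m` spread the weight
`|ψ_j(r)|²` evenly over the diagonal, so that `∑ Kᴴ K = ∑_j p_j • 1 = 1`.
-/

open scoped Matrix ComplexOrder

namespace OneShot

variable {ι κ : Type*} [Fintype ι] [DecidableEq ι] [Fintype κ] [DecidableEq κ]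

/-- A quantum state: a positive semidefinite matrix with unit trace. -/
def IsState (ρ : Matrix ι ι ℂ) : Prop := ρ.PosSemidef ∧ ρ.trace = 1

/-- An incoherent state: a state that is diagonal in the computational basis. -/
def IsIncoherent (ρ : Matrix ι ι ℂ) : Prop := IsState ρ ∧ ρ.IsDiag

/-- The completely dephasing channel `Δ`. -/
def dephase (ρ : Matrix ι ι ℂ) : Matrix ι ι ℂ := Matrix.diagonal fun i => ρ i i

/-- The max-relative entropy of coherence
`C_max(ρ) = min_{δ ∈ 𝓘} D_max(ρ‖δ) = log₂ min {λ ≥ 0 | ∃ δ ∈ 𝓘, ρ ≤ λ δ}`. -/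
noncomputable def Cmax (ρ : Matrix ι ι ℂ) : ℝ :=
  Real.logb 2 (sInf {l : ℝ | 0 ≤ l ∧ ∃ δ, IsIncoherent δ ∧ (l • δ - ρ).PosSemidef})

/-- `C_{Δ,max}(ρ) = log₂ min {λ ≥ 0 | ρ ≤ λ Δ(ρ)}`. -/
noncomputable def CDmax (ρ : Matrix ι ι ℂ) : ℝ :=
  Real.logb 2 (sInf {l : ℝ | 0 ≤ l ∧ (l • dephase ρ - ρ).PosSemidef})

/-- Complete positivity of a linear map on matrices. -/
def CompletelyPositive (Λ : Matrix ι ι ℂ →ₗ[ℂ] Matrix κ κ ℂ) : Prop :=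
  ∀ (k : ℕ) (M : Matrix (Fin k × ι) (Fin k × ι) ℂ), M.PosSemidef →
    (Matrix.of fun p q : Fin k × κ =>
      Λ (Matrix.of fun x y => M (p.1, x) (q.1, y)) p.2 q.2).PosSemidef

/-- Trace preservation. -/
def TracePreserving (Λ : Matrix ι ι ℂ →ₗ[ℂ] Matrix κ κ ℂ) : Prop :=
  ∀ A, (Λ A).trace = A.trace

/-- A maximally incoherent operation (MIO): a CPTP map sending every incoherent state
to an incoherent state. -/
def IsMIO (Λ : Matrix ι ι ℂ →ₗ[ℂ] Matrix κ κ ℂ) : Prop :=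
  CompletelyPositive Λ ∧ TracePreserving Λ ∧ ∀ δ, IsIncoherent δ → IsIncoherent (Λ δ)

/-- A dephasing-covariant incoherent operation (DIO): a CPTP map commuting with `Δ`. -/
def IsDIO (Λ : Matrix ι ι ℂ →ₗ[ℂ] Matrix ι ι ℂ) : Prop :=
  CompletelyPositive Λ ∧ TracePreserving Λ ∧ ∀ ρ, Λ (dephase ρ) = dephase (Λ ρ)

/-- An incoherent-preserving (Kraus) operator: `K δ Kᴴ` is a nonnegative multiple of an
incoherent state, for every incoherent state `δ`. -/
def IncoherentPreserving (K : Matrix κ ι ℂ) : Prop :=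
  ∀ δ : Matrix ι ι ℂ, IsIncoherent δ →
    ∃ c : ℝ, 0 ≤ c ∧ ∃ δ' : Matrix κ κ ℂ, IsIncoherent δ' ∧ K * δ * Kᴴ = (c : ℂ) • δ'

/-- An incoherent operation (IO). -/
def IsIO (Λ : Matrix ι ι ℂ →ₗ[ℂ] Matrix κ κ ℂ) : Prop :=
  ∃ (N : ℕ) (K : Fin N → Matrix κ ι ℂ),
    (∀ n, IncoherentPreserving (K n)) ∧ (∑ n, (K n)ᴴ * K n = 1) ∧
    ∀ ρ, Λ ρ = ∑ n, K n * ρ * (K n)ᴴ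

/-- A strictly incoherent operation (SIO). -/
def IsSIO (Λ : Matrix ι ι ℂ →ₗ[ℂ] Matrix κ κ ℂ) : Prop :=
  ∃ (N : ℕ) (K : Fin N → Matrix κ ι ℂ),
    (∀ n, IncoherentPreserving (K n)) ∧ (∀ n, IncoherentPreserving (K n)ᴴ) ∧
    (∑ n, (K n)ᴴ * K n = 1) ∧ ∀ ρ, Λ ρ = ∑ n, K n * ρ * (K n)ᴴ

/-- The outer product `|ψ⟩⟨ψ|`. -/
def outer (ψ : ι → ℂ) : Matrix ι ι ℂ := Matrix.of fun i j => ψ i * star (ψ j)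

/-- `T ψ` is the number of nonzero computational-basis coefficients of `ψ`. -/
noncomputable def T (ψ : ι → ℂ) : ℕ := (Finset.univ.filter fun i => ψ i ≠ 0).card

/-- A finite pure-state decomposition `ρ = Σ_j p_j |ψ_j⟩⟨ψ_j|`. -/
def IsDecomposition (ρ : Matrix ι ι ℂ) (n : ℕ) (p : Fin n → ℝ) (ψ : Fin n → ι → ℂ) : Prop :=
  (∀ j, 0 < p j) ∧ (∑ j, p j = 1) ∧ (∀ j, ∑ i, Complex.normSq (ψ j i) = 1) ∧
    ρ = ∑ j, p j • outer (ψ j)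

/-- `C_0(ρ) = min over decompositions of max_j log₂ T(ψ_j)`. -/
noncomputable def C0 (ρ : Matrix ι ι ℂ) : ℝ :=
  sInf { r | ∃ n p ψ, IsDecomposition ρ n p ψ ∧
    r = Real.logb 2 (↑(Finset.univ.sup fun j => T (ψ j)) : ℝ) }

/-- Matrix square root of a positive semidefinite matrix (junk value `0` elsewhere). -/
noncomputable def msqrt (A : Matrix ι ι ℂ) : Matrix ι ι ℂ :=
  letI := Classical.propDecidable A.PosSemidef
  if h : A.PosSemidef then
    (h.1.eigenvectorUnitary : Matrix ι ι ℂ) *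
      Matrix.diagonal ((↑) ∘ (√·) ∘ h.1.eigenvalues) *
      (star h.1.eigenvectorUnitary : Matrix ι ι ℂ)
  else 0

/-- Uhlmann fidelity `F(ρ,σ) = (Tr √(√ρ σ √ρ))²`. -/
noncomputable def Fid (ρ σ : Matrix ι ι ℂ) : ℝ :=
  ((msqrt (msqrt ρ * σ * msqrt ρ)).trace.re) ^ 2

/-- Smoothed `C_max`. -/
noncomputable def Cmaxeps (ρ : Matrix ι ι ℂ) (ε : ℝ) : ℝ :=
  sInf { r | ∃ ρ', IsState ρ' ∧ 1 - ε ≤ Fid ρ ρ' ∧ r = Cmax ρ' }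

/-- Smoothed `C_{Δ,max}`. -/
noncomputable def CDmaxeps (ρ : Matrix ι ι ℂ) (ε : ℝ) : ℝ :=
  sInf { r | ∃ ρ', IsState ρ' ∧ 1 - ε ≤ Fid ρ ρ' ∧ r = CDmax ρ' }

/-- Smoothed `C_0`. -/
noncomputable def C0eps (ρ : Matrix ι ι ℂ) (ε : ℝ) : ℝ :=
  sInf { r | ∃ ρ', IsState ρ' ∧ 1 - ε ≤ Fid ρ ρ' ∧ r = C0 ρ' }

/-- The maximally coherent state `Ψ_M = |Ψ_M⟩⟨Ψ_M|` of dimension `M`. -/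
noncomputable def PsiM (M : ℕ) : Matrix (Fin M) (Fin M) ℂ := Matrix.of fun _ _ => (1 : ℂ) / M

/-- One-shot coherence cost under MIO. -/
noncomputable def CMIOeps (ρ : Matrix ι ι ℂ) (ε : ℝ) : ℝ :=
  sInf { r | ∃ M : ℕ, 1 ≤ M ∧ r = Real.logb 2 M ∧
    ∃ Λ : Matrix (Fin M) (Fin M) ℂ →ₗ[ℂ] Matrix ι ι ℂ, IsMIO Λ ∧ 1 - ε ≤ Fid ρ (Λ (PsiM M)) }

/-- One-shot coherence cost under DIO. -/
noncomputable def CDIOeps (ρ : Matrix ι ι ℂ) (ε : ℝ) : ℝ :=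
  sInf { r | ∃ M : ℕ, 1 ≤ M ∧ r = Real.logb 2 M ∧
    ∃ Λ : Matrix (Fin M) (Fin M) ℂ →ₗ[ℂ] Matrix ι ι ℂ,
      CompletelyPositive Λ ∧ TracePreserving Λ ∧ (∀ ω, Λ (dephase ω) = dephase (Λ ω)) ∧
      1 - ε ≤ Fid ρ (Λ (PsiM M)) }

/-- One-shot coherence cost under IO. -/
noncomputable def CIOeps (ρ : Matrix ι ι ℂ) (ε : ℝ) : ℝ :=
  sInf { r | ∃ M : ℕ, 1 ≤ M ∧ r = Real.logb 2 M ∧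
    ∃ Λ : Matrix (Fin M) (Fin M) ℂ →ₗ[ℂ] Matrix ι ι ℂ, IsIO Λ ∧ 1 - ε ≤ Fid ρ (Λ (PsiM M)) }

/-- One-shot coherence cost under SIO. -/
noncomputable def CSIOeps (ρ : Matrix ι ι ℂ) (ε : ℝ) : ℝ :=
  sInf { r | ∃ M : ℕ, 1 ≤ M ∧ r = Real.logb 2 M ∧
    ∃ Λ : Matrix (Fin M) (Fin M) ℂ →ₗ[ℂ] Matrix ι ι ℂ, IsSIO Λ ∧ 1 - ε ≤ Fid ρ (Λ (PsiM M)) }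

/-- Matrix logarithm (base 2) via the spectral decomposition, with `log₂ 0 = 0` junk
convention on the kernel, and junk value `0` on non-Hermitian matrices. -/
noncomputable def mlog2 (A : Matrix ι ι ℂ) : Matrix ι ι ℂ :=
  letI := Classical.propDecidable A.IsHermitian
  if h : A.IsHermitian then
    (h.eigenvectorUnitary : Matrix ι ι ℂ) *
      Matrix.diagonal (fun i => (Real.logb 2 (h.eigenvalues i) : ℂ)) *
      (h.eigenvectorUnitary : Matrix ι ι ℂ)ᴴ
  else 0

/-- The relative entropy of coherence `C_r(ρ) = min_{δ ∈ 𝓘} S(ρ‖δ)`, where the minimum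
is (equivalently) restricted to those `δ` whose support contains the support of `ρ`,
on which `S(ρ‖δ) = Tr[ρ (log₂ ρ − log₂ δ)]` is finite. -/
noncomputable def Cr (ρ : Matrix ι ι ℂ) : ℝ :=
  sInf { r | ∃ δ, IsIncoherent δ ∧ (∀ v : ι → ℂ, δ.mulVec v = 0 → ρ.mulVec v = 0) ∧
    r = ((ρ * (mlog2 ρ - mlog2 δ)).trace).re }

/-- Von Neumann entropy (base 2). -/
noncomputable def vN (σ : Matrix ι ι ℂ) : ℝ := -((σ * mlog2 σ).trace.re)

/-- The coherence of formation. -/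
noncomputable def Cf (ρ : Matrix ι ι ℂ) : ℝ :=
  sInf { r | ∃ n p ψ, IsDecomposition ρ n p ψ ∧
    r = ∑ j, p j * vN (dephase (outer (ψ j))) }

/-- The set `A_ρ = { (1/t)[(1+t)Δ(ρ) − ρ] : t > 0, (1+t)Δ(ρ) − ρ ≥ 0 }`. -/
def Aset (ρ : Matrix ι ι ℂ) : Set (Matrix ι ι ℂ) :=
  { σ | ∃ t : ℝ, 0 < t ∧ ((1 + t) • dephase ρ - ρ).PosSemidef ∧
      σ = t⁻¹ • ((1 + t) • dephase ρ - ρ) }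

/-- The `n`-fold tensor power `ρ^{⊗ n}`. -/
def tpow (ρ : Matrix ι ι ℂ) (n : ℕ) : Matrix (Fin n → ι) (Fin n → ι) ℂ :=
  Matrix.of fun i j => ∏ t, ρ (i t) (j t)

section IncoherentPreserving

variable {α β : Type*} [Fintype α] [Fintype β]

lemma exists_isIncoherent [Nonempty β] : ∃ δ : Matrix β β ℂ, IsIncoherent δ := by
  classical
  refine ⟨((Fintype.card β : ℂ)⁻¹) • 1, ⟨?_, ?_⟩, Matrix.isDiag_one.smul _⟩
  · exact Matrix.PosSemidef.one.smul (by positivity)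
  · simp [Matrix.trace_smul, Matrix.trace_one]

lemma exists_smul_isIncoherent_of_posSemidef [Nonempty β] {A : Matrix β β ℂ}
    (hA : A.PosSemidef) (hdiag : A.IsDiag) :
    ∃ c : ℝ, 0 ≤ c ∧ ∃ δ, IsIncoherent δ ∧ A = (c : ℂ) • δ := by
  by_cases h0 : A.trace = 0
  · obtain ⟨δ, hδ⟩ := exists_isIncoherent (β := β)
    exact ⟨0, le_rfl, δ, hδ, by simp [hA.trace_eq_zero_iff.mp h0]⟩
  have htr : A.trace = A.trace.re :=
    Complex.eq_re_of_ofReal_le (by rw [Complex.ofReal_zero]; exact hA.trace_nonneg)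
  refine ⟨A.trace.re, Complex.zero_le_real.mp (htr ▸ hA.trace_nonneg), A.trace⁻¹ • A,
    ⟨⟨hA.smul (inv_nonneg.mpr hA.trace_nonneg), ?_⟩, hdiag.smul _⟩, ?_⟩
  · rw [Matrix.trace_smul, smul_eq_mul, inv_mul_cancel₀ h0]
  · rw [← htr, smul_smul, mul_inv_cancel₀ h0, one_smul]

lemma incoherentPreserving_of_column_subsingleton [Nonempty β] (K : Matrix β α ℂ)
    (hK : ∀ l r r', K r l ≠ 0 → K r' l ≠ 0 → r = r') : IncoherentPreserving K := by
  classical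
  intro δ hδ
  refine exists_smul_isIncoherent_of_posSemidef (hδ.1.1.mul_mul_conjTranspose_same K)
    fun r r' hrr' => ?_
  change (K * δ * Kᴴ) r r' = 0
  rw [← hδ.2.diagonal_diag, Matrix.mul_apply]
  refine Finset.sum_eq_zero fun l _ => ?_
  by_cases hr : K r l = 0
  · simp [hr]
  by_cases hr' : K r' l = 0
  · simp [hr']
  exact absurd (hK l r r' hr hr') hrr'

lemma incoherentPreserving_conjTranspose_of_row_subsingleton [Nonempty α] (K : Matrix β α ℂ)
    (hK : ∀ r l l', K r l ≠ 0 → K r l' ≠ 0 → l = l') : IncoherentPreserving Kᴴ :=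
  incoherentPreserving_of_column_subsingleton _ fun r l l' hl hl' =>
    hK r l l' (by simpa using hl) (by simpa using hl')

end IncoherentPreserving

section ShiftKraus

variable {β : Type*} {M : ℕ}

lemma mul_PsiM_mul_conjTranspose (K : Matrix β (Fin M) ℂ) :
    K * PsiM M * Kᴴ = (M : ℂ)⁻¹ • outer fun r => ∑ l, K r l := by
  ext r r'
  simp [Matrix.mul_apply, PsiM, outer, Finset.mul_sum, Finset.sum_mul, star_sum]
  exact Finset.sum_congr rfl fun _ _ => Finset.sum_congr rfl fun _ _ => by ring

lemma exists_injOn_fin [NeZero M] {s : Finset β} (hs : s.card ≤ M) :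
    ∃ σ : β → Fin M, Set.InjOn σ s := by
  classical
  refine ⟨fun r => if h : r ∈ s then Fin.castLE hs (s.equivFin ⟨r, h⟩) else 0, ?_⟩
  intro a ha b hb hab
  rw [Finset.mem_coe] at ha hb
  simp only [dif_pos ha, dif_pos hb] at hab
  exact congrArg Subtype.val (s.equivFin.injective (Fin.castLE_injective hs hab))

/-- `∑ r, v r |r⟩⟨σ r + m|`, addition in `Fin M` being cyclic. -/
def shiftKraus (σ : β → Fin M) (v : β → ℂ) (m : Fin M) : Matrix β (Fin M) ℂ :=
  Matrix.of fun r l => if σ r + m = l then v r else 0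

variable (σ : β → Fin M) (v : β → ℂ)

lemma shiftKraus_apply_ne_zero_iff (m : Fin M) (r : β) (l : Fin M) :
    shiftKraus σ v m r l ≠ 0 ↔ σ r + m = l ∧ v r ≠ 0 := by
  simp [shiftKraus]

lemma sum_shiftKraus_apply (m : Fin M) (r : β) : ∑ l, shiftKraus σ v m r l = v r := by
  simp [shiftKraus]

lemma shiftKraus_mul_PsiM_mul_conjTranspose (m : Fin M) :
    shiftKraus σ v m * PsiM M * (shiftKraus σ v m)ᴴ = (M : ℂ)⁻¹ • outer v := by
  simp only [mul_PsiM_mul_conjTranspose, sum_shiftKraus_apply]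

lemma sum_conjTranspose_shiftKraus_mul_shiftKraus [Fintype β] [NeZero M] :
    ∑ m, (shiftKraus σ v m)ᴴ * shiftKraus σ v m =
      ((∑ r, Complex.normSq (v r) : ℝ) : ℂ) • 1 := by
  ext l l'
  have hterm : ∀ r, ∑ m, star (shiftKraus σ v m r l) * shiftKraus σ v m r l' =
      if l = l' then (Complex.normSq (v r) : ℂ) else 0 := by
    intro r
    simp only [shiftKraus, Matrix.of_apply, ← eq_sub_iff_add_eq']
    simp [apply_ite star, ite_mul, Finset.sum_ite_eq', Complex.normSq_eq_conj_mul_self, eq_comm]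
  simp only [Matrix.sum_apply, Matrix.mul_apply, Matrix.conjTranspose_apply]
  rw [Finset.sum_comm]
  simp only [hterm]
  by_cases h : l = l' <;> simp [h]

lemma incoherentPreserving_shiftKraus [Fintype β] [Nonempty β] [NeZero M]
    (hσ : Set.InjOn σ {r | v r ≠ 0}) (m : Fin M) : IncoherentPreserving (shiftKraus σ v m) := by
  refine incoherentPreserving_of_column_subsingleton _ fun l r r' hr hr' => ?_
  rw [shiftKraus_apply_ne_zero_iff] at hr hr'
  exact hσ hr.2 hr'.2 (add_right_cancel (hr.1.trans hr'.1.symm))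

lemma incoherentPreserving_shiftKraus_conjTranspose [Fintype β] [NeZero M] (m : Fin M) :
    IncoherentPreserving (shiftKraus σ v m)ᴴ := by
  refine incoherentPreserving_conjTranspose_of_row_subsingleton _ fun r l l' hl hl' => ?_
  rw [shiftKraus_apply_ne_zero_iff] at hl hl'
  exact hl.1.symm.trans hl'.1

lemma exists_kraus_PsiM_eq_outer [Fintype β] (hv : v ≠ 0) (hT : T v ≤ M) :
    ∃ K : Fin M → Matrix β (Fin M) ℂ, (∀ m, IncoherentPreserving (K m)) ∧
      (∀ m, IncoherentPreserving (K m)ᴴ) ∧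
      ∑ m, (K m)ᴴ * K m = ((∑ r, Complex.normSq (v r) : ℝ) : ℂ) • 1 ∧
      ∑ m, K m * PsiM M * (K m)ᴴ = outer v := by
  obtain ⟨r₀, hr₀⟩ := Function.ne_iff.mp hv
  have : Nonempty β := ⟨r₀⟩
  have : NeZero M := ⟨(Finset.card_pos.mpr ⟨r₀, by simpa using hr₀⟩).trans_le hT |>.ne'⟩
  obtain ⟨σ, hσ⟩ := exists_injOn_fin hT
  refine ⟨shiftKraus σ v, incoherentPreserving_shiftKraus σ v (by simpa using hσ),
    incoherentPreserving_shiftKraus_conjTranspose σ v,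
    sum_conjTranspose_shiftKraus_mul_shiftKraus σ v, ?_⟩
  simp only [shiftKraus_mul_PsiM_mul_conjTranspose, Finset.sum_const, Finset.card_univ,
    Fintype.card_fin, ← Nat.cast_smul_eq_nsmul ℂ, smul_smul]
  rw [mul_inv_cancel₀ (Nat.cast_ne_zero.mpr (NeZero.ne M)), one_smul]

end ShiftKraus

section Scaling

variable {β : Type*}

lemma T_smul [Fintype β] {c : ℂ} (hc : c ≠ 0) (ψ : β → ℂ) : T (c • ψ) = T ψ := by
  simp [T, hc]

lemma outer_ofReal_sqrt_smul {p : ℝ} (hp : 0 ≤ p) (ψ : β → ℂ) :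
    outer ((√p : ℂ) • ψ) = p • outer ψ := by
  have hsq : (√p : ℂ) * √p = p := by rw [← Complex.ofReal_mul, Real.mul_self_sqrt hp]
  ext r r'
  simp only [outer, Matrix.of_apply, Matrix.smul_apply, Pi.smul_apply, smul_eq_mul, star_mul',
    Complex.star_def, Complex.conj_ofReal, Complex.real_smul]
  linear_combination (ψ r * starRingEnd ℂ (ψ r')) * hsq

lemma sum_normSq_ofReal_sqrt_smul [Fintype β] {p : ℝ} (hp : 0 ≤ p) (ψ : β → ℂ) :
    ∑ r, Complex.normSq (((√p : ℂ) • ψ) r) = p * ∑ r, Complex.normSq (ψ r) := by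
  simp [Complex.normSq_mul, Real.mul_self_sqrt hp, Finset.mul_sum]

end Scaling

theorem SIO_exact_dilution_general {d M : ℕ}
    (ρ' : Matrix (Fin d) (Fin d) ℂ)
    (n : ℕ) (p : Fin n → ℝ) (ψ : Fin n → Fin d → ℂ)
    (hdec : IsDecomposition ρ' n p ψ) (hT : ∀ j, T (ψ j) ≤ M) :
    ∃ (N : ℕ) (K : Fin N → Matrix (Fin d) (Fin M) ℂ),
      (∀ m, IncoherentPreserving (K m)) ∧ (∀ m, IncoherentPreserving (K m)ᴴ) ∧
      (∑ m, (K m)ᴴ * K m = 1) ∧ (∑ m, K m * PsiM M * (K m)ᴴ = ρ') := by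
  obtain ⟨hp, hpsum, hnorm, rfl⟩ := hdec
  have hsqrt : ∀ j, (√(p j) : ℂ) ≠ 0 := fun j =>
    Complex.ofReal_ne_zero.mpr (Real.sqrt_ne_zero'.mpr (hp j))
  have hv : ∀ j, (√(p j) : ℂ) • ψ j ≠ 0 := fun j =>
    smul_ne_zero (hsqrt j) fun h => by simpa [h] using hnorm j
  choose K hK hKadj hKK hKΨ using fun j => exists_kraus_PsiM_eq_outer _ (hv j)
    ((T_smul (hsqrt j) (ψ j)).trans_le (hT j))
  let e := (finProdFinEquiv (m := n) (n := M)).symm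
  refine ⟨n * M, fun x => K (e x).1 (e x).2, fun x => hK _ _, fun x => hKadj _ _, ?_, ?_⟩
  · rw [e.sum_comp (fun y => (K y.1 y.2)ᴴ * K y.1 y.2), Fintype.sum_prod_type]
    simp only [hKK, sum_normSq_ofReal_sqrt_smul (hp _).le, hnorm, mul_one, ← Finset.sum_smul,
      ← Complex.ofReal_sum, hpsum, Complex.ofReal_one, one_smul]
  · rw [e.sum_comp (fun y => K y.1 y.2 * PsiM M * (K y.1 y.2)ᴴ), Fintype.sum_prod_type]
    simp only [hKΨ, outer_ofReal_sqrt_smul (hp _).le]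

/-- exact SIO dilution from a decomposition whose pure states all have at
most `M` nonzero computational-basis coefficients. -/
theorem SIO_exact_dilution {d M : ℕ} (hM : 1 ≤ M) (hd : M ≤ d)
    (ρ' : Matrix (Fin d) (Fin d) ℂ) (hρ' : IsState ρ')
    (n : ℕ) (p : Fin n → ℝ) (ψ : Fin n → Fin d → ℂ)
    (hdec : IsDecomposition ρ' n p ψ) (hT : ∀ j, T (ψ j) ≤ M) :
    ∃ (N : ℕ) (K : Fin N → Matrix (Fin d) (Fin M) ℂ),
      (∀ m, IncoherentPreserving (K m)) ∧ (∀ m, IncoherentPreserving (K m)ᴴ) ∧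
      (∑ m, (K m)ᴴ * K m = 1) ∧ (∑ m, K m * PsiM M * (K m)ᴴ = ρ') :=
  SIO_exact_dilution_general ρ' n p ψ hdec hT

end OneShot
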